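/- Let K be a finite simplicial complex with scat K > 0 and let ΣK = K ∗ S⁰ be the simplicial suspension of K (the join with a two-point complex). Then scat(ΣK) = 1. -/

import Mathlib

/-- An abstract simplicial complex on a vertex type `V`:
a downward-closed family of nonempty finite sets of vertices. -/
structure AbsSC (V : Type) where
  faces : Set (Finset V)
  nonempty_of_mem : ∀ σ ∈ faces, σ.Nonempty
  down_closed : ∀ σ ∈ faces, ∀ τ : Finset V, τ ⊆ σ → τ.Nonempty → τ ∈ faces

namespace AbsSC

variable {V W V' W' : Type} [DecidableEq V] [DecidableEq W]

/-- `f` is a simplicial map from `K` to `L`. -/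
def IsSimplicial (K : AbsSC V) (L : AbsSC W) (f : V → W) : Prop :=
  ∀ σ ∈ K.faces, σ.image f ∈ L.faces

/-- Two simplicial maps are contiguous. -/
def Contig (K : AbsSC V) (L : AbsSC W) (f g : V → W) : Prop :=
  IsSimplicial K L f ∧ IsSimplicial K L g ∧
    ∀ σ ∈ K.faces, σ.image f ∪ σ.image g ∈ L.faces

/-- Two maps are in the same contiguity class: they are connected by a
finite chain of pairwise contiguous simplicial maps. -/
def ContigClass (K : AbsSC V) (L : AbsSC W) : (V → W) → (V → W) → Prop :=
  Relation.ReflTransGen (Contig K L)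

/-- `U` is a categorical subcomplex of `K`: the inclusion is in the
contiguity class of a constant map onto a vertex of `K`. -/
def Categorical (K U : AbsSC V) : Prop :=
  U.faces ⊆ K.faces ∧ ∃ v : V, {v} ∈ K.faces ∧ ContigClass U K id (fun _ => v)

/-- `K` is covered by `n+1` categorical subcomplexes. -/
def CatCover (K : AbsSC V) (n : ℕ) : Prop :=
  ∃ U : Fin (n + 1) → AbsSC V, (∀ i, Categorical K (U i)) ∧
    ∀ σ ∈ K.faces, ∃ i, σ ∈ (U i).faces

/-- The simplicial Lusternik–Schnirelmann category of `K`. -/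
noncomputable def scat (K : AbsSC V) : ℕ := sInf {n | CatCover K n}

/-- A maximal simplex of `K`. -/
def MaximalFace (K : AbsSC V) (σ : Finset V) : Prop :=
  σ ∈ K.faces ∧ ∀ τ ∈ K.faces, σ ⊆ τ → σ = τ

/-- The vertex `v` is dominated (by some other vertex `v'`). -/
def Dominated (K : AbsSC V) (v : V) : Prop :=
  ∃ v' : V, v' ≠ v ∧ {v} ∈ K.faces ∧ {v'} ∈ K.faces ∧
    ∀ σ : Finset V, MaximalFace K σ → v ∈ σ → v' ∈ σ

/-- A minimal complex: no vertex is dominated. -/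
def Minimal (K : AbsSC V) : Prop := ∀ v : V, ¬ Dominated K v

/-- Deleting (the open star of) a vertex. -/
def delete (K : AbsSC V) (v : V) : AbsSC V where
  faces := {σ ∈ K.faces | v ∉ σ}
  nonempty_of_mem := fun σ h => K.nonempty_of_mem σ h.1
  down_closed := fun σ h τ hτ hne =>
    ⟨K.down_closed σ h.1 τ hτ hne, fun hv => h.2 (hτ hv)⟩

/-- An elementary strong collapse: removal of the open star of a dominated vertex. -/
def ElemStrongCollapse (K L : AbsSC V) : Prop :=
  ∃ v : V, Dominated K v ∧ L = K.delete v

/-- A complex consisting of a single vertex. -/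
def IsPoint (K : AbsSC V) : Prop := ∃ v : V, K.faces = {{v}}

/-- `K` is strongly collapsible: it reduces to a single vertex by a
sequence of elementary strong collapses. -/
def StronglyCollapsible (K : AbsSC V) : Prop :=
  ∃ L : AbsSC V, Relation.ReflTransGen ElemStrongCollapse K L ∧ IsPoint L

/-- `K` is covered by `n+1` subcomplexes, each strongly collapsible in itself. -/
def GCatCover (K : AbsSC V) (n : ℕ) : Prop :=
  ∃ U : Fin (n + 1) → AbsSC V,
    (∀ i, (U i).faces ⊆ K.faces ∧ StronglyCollapsible (U i)) ∧
    ∀ σ ∈ K.faces, ∃ i, σ ∈ (U i).faces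

/-- The geometric simplicial category of `K`. -/
noncomputable def gscat (K : AbsSC V) : ℕ := sInf {n | GCatCover K n}

/-- Strong homotopy equivalence of complexes. -/
def StrongEquiv (K : AbsSC V) (L : AbsSC W) : Prop :=
  ∃ (φ : V → W) (ψ : W → V), IsSimplicial K L φ ∧ IsSimplicial L K ψ ∧
    ContigClass K K (ψ ∘ φ) id ∧ ContigClass L L (φ ∘ ψ) id

/-- The barycentric subdivision: vertices are the simplices of `K`,
simplices are the chains of simplices of `K`. -/
def sd (K : AbsSC V) : AbsSC (Finset V) where
  faces := {S | S.Nonempty ∧ (∀ σ ∈ S, σ ∈ K.faces) ∧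
    ∀ σ ∈ S, ∀ τ ∈ S, σ ⊆ τ ∨ τ ⊆ σ}
  nonempty_of_mem := fun S hS => hS.1
  down_closed := fun S hS T hTS hT =>
    ⟨hT, fun σ hσ => hS.2.1 σ (hTS hσ),
      fun σ hσ τ hτ => hS.2.2 σ (hTS hσ) τ (hTS hτ)⟩

/-- The categorical product of simplicial complexes. -/
def prod (K : AbsSC V) (L : AbsSC W) : AbsSC (V × W) where
  faces := {σ | σ.Nonempty ∧ σ.image Prod.fst ∈ K.faces ∧ σ.image Prod.snd ∈ L.faces}
  nonempty_of_mem := fun σ h => h.1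
  down_closed := fun σ h τ hτ hne =>
    ⟨hne, K.down_closed _ h.2.1 _ (Finset.image_subset_image hτ) (hne.image _),
      L.down_closed _ h.2.2 _ (Finset.image_subset_image hτ) (hne.image _)⟩

/-- The `n`-fold categorical power of `K`. -/
def power (K : AbsSC V) (n : ℕ) : AbsSC (Fin n → V) where
  faces := {σ | σ.Nonempty ∧ ∀ j : Fin n, σ.image (fun f => f j) ∈ K.faces}
  nonempty_of_mem := fun σ h => h.1
  down_closed := by
    intro σ h τ hτ hne
    exact ⟨hne, fun j => K.down_closed _ (h.2 j) _ (Finset.image_subset_image hτ) (hne.image _)⟩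

/-- The `n`-th fat wedge of a pointed complex `(K, v₀)` inside `Kⁿ`. -/
def fatWedge (K : AbsSC V) (n : ℕ) (v₀ : V) : AbsSC (Fin n → V) where
  faces := {σ | σ ∈ (K.power n).faces ∧ ∃ j : Fin n, ∀ f ∈ σ, f j = v₀}
  nonempty_of_mem := fun σ h => (K.power n).nonempty_of_mem σ h.1
  down_closed := fun σ h τ hτ hne =>
    ⟨(K.power n).down_closed σ h.1 τ hτ hne,
      h.2.imp fun j hj f hf => hj f (hτ hf)⟩

/-- The part of a set of vertices of a disjoint union lying in the left factor. -/
noncomputable def sumLeft (σ : Finset (V ⊕ W)) : Finset V :=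
  σ.preimage Sum.inl Sum.inl_injective.injOn

/-- The part of a set of vertices of a disjoint union lying in the right factor. -/
noncomputable def sumRight (σ : Finset (V ⊕ W)) : Finset W :=
  σ.preimage Sum.inr Sum.inr_injective.injOn

/-- The simplicial join `K ∗ L`. -/
def join (K : AbsSC V) (L : AbsSC W) : AbsSC (V ⊕ W) where
  faces := {σ | σ.Nonempty ∧ ((sumLeft σ).Nonempty → sumLeft σ ∈ K.faces) ∧
    ((sumRight σ).Nonempty → sumRight σ ∈ L.faces)}
  nonempty_of_mem := fun σ h => h.1
  down_closed := by
    intro σ h τ hτ hne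
    have hl : sumLeft τ ⊆ sumLeft σ := fun x hx => by
      rw [sumLeft, Finset.mem_preimage] at *; exact hτ hx
    have hr : sumRight τ ⊆ sumRight σ := fun x hx => by
      rw [sumRight, Finset.mem_preimage] at *; exact hτ hx
    exact ⟨hne,
      fun h1 => K.down_closed _ (h.2.1 (h1.mono hl)) _ hl h1,
      fun h1 => L.down_closed _ (h.2.2 (h1.mono hr)) _ hr h1⟩

/-- A graph: a simplicial complex of dimension at most 1. -/
def IsGraph (G : AbsSC V) : Prop := ∀ σ ∈ G.faces, σ.card ≤ 2

/-- A connected (nonempty) complex: any two vertices are joined by an edge path. -/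
def ConnectedG (G : AbsSC V) : Prop :=
  G.faces.Nonempty ∧
    ∀ u v : V, {u} ∈ G.faces → {v} ∈ G.faces →
      ∃ (n : ℕ) (p : Fin (n + 1) → V), p 0 = u ∧ p (Fin.last n) = v ∧
        ∀ i : Fin n, ({p i.castSucc, p i.succ} : Finset V) ∈ G.faces

/-- A cycle of length `n` in a graph: `n ≥ 3` distinct vertices joined cyclically by edges. -/
def IsCycle (G : AbsSC V) (n : ℕ) (p : ZMod n → V) : Prop :=
  3 ≤ n ∧ Function.Injective p ∧
    ∀ i : ZMod n, ({p i, p (i + 1)} : Finset V) ∈ G.faces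

/-- A forest: a graph containing no cycle. -/
def IsForest (G : AbsSC V) : Prop := ∀ (n : ℕ) (p : ZMod n → V), ¬ IsCycle G n p

/-- A tree: a connected forest. -/
def IsTree (G : AbsSC V) : Prop := IsForest G ∧ ConnectedG G

/-- A decomposition of a graph into `k` edge-disjoint spanning forests. -/
def EdgeDisjointForestDecomp (G : AbsSC V) (k : ℕ) : Prop :=
  ∃ F : Fin k → AbsSC V,
    (∀ i, (F i).faces ⊆ G.faces ∧ IsForest (F i) ∧
      ∀ v : V, {v} ∈ G.faces → {v} ∈ (F i).faces) ∧
    (∀ σ ∈ G.faces, ∃ i, σ ∈ (F i).faces) ∧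
    ∀ (i j : Fin k) (σ : Finset V), σ.card = 2 →
      σ ∈ (F i).faces → σ ∈ (F j).faces → i = j

/-- The arboricity of a graph. -/
noncomputable def arboricity (G : AbsSC V) : ℕ :=
  sInf {k | EdgeDisjointForestDecomp G k}


end AbsSC

/-!
The two cones `ΣK - N` and `ΣK - S` are categorical (each contracts onto the other pole), so
`scat ΣK ≤ 1`. For the lower bound, `scat ΣK = 0` would force `scat K = 0`. Deleting a dominated
vertex (a strong collapse) is a strong equivalence, so it preserves contractibility, and if `v` is
dominated in `K` then `v` is dominated in `ΣK` with `ΣK - v = Σ(K - v)`; so we may assume `K`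
minimal. A minimal complex is rigid: every map in the contiguity class of the identity fixes all
vertices. If `K` is minimal and not a point, then `ΣK` is minimal too, and its two poles show that
it is not contractible.
-/

namespace Finset

variable {V W : Type}

@[simp] theorem toLeft_singleton_inl (a : V) : ({.inl a} : Finset (V ⊕ W)).toLeft = {a} := by
  ext; simp

@[simp] theorem toRight_singleton_inl (a : V) : ({.inl a} : Finset (V ⊕ W)).toRight = ∅ := by
  ext; simp

@[simp] theorem toLeft_singleton_inr (b : W) : ({.inr b} : Finset (V ⊕ W)).toLeft = ∅ := by
  ext; simp

@[simp] theorem toRight_singleton_inr (b : W) : ({.inr b} : Finset (V ⊕ W)).toRight = {b} := by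
  ext; simp

end Finset

namespace AbsSC

section Basic

variable {V : Type} {K : AbsSC V} {v : V}

theorem faces_injective : Function.Injective (faces : AbsSC V → Set (Finset V)) := by
  rintro ⟨_, _, _⟩ ⟨_, _, _⟩ rfl
  rfl

theorem singleton_mem_of_mem {σ : Finset V} (hσ : σ ∈ K.faces) (hv : v ∈ σ) :
    {v} ∈ K.faces :=
  K.down_closed σ hσ {v} (Finset.singleton_subset_iff.2 hv) (Finset.singleton_nonempty v)

theorem exists_maximalFace_superset [Finite V] {σ : Finset V} (hσ : σ ∈ K.faces) :
    ∃ τ, MaximalFace K τ ∧ σ ⊆ τ := by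
  obtain ⟨τ, hστ, hτ⟩ := K.faces.toFinite.exists_le_maximal hσ
  exact ⟨τ, ⟨hτ.prop, fun ρ hρ hτρ => le_antisymm hτρ (hτ.le_of_ge hρ hτρ)⟩, hστ⟩

theorem ncard_faces_delete_lt [Finite V] (hv : {v} ∈ K.faces) :
    (K.delete v).faces.ncard < K.faces.ncard :=
  Set.ncard_lt_ncard ⟨fun _ hσ => hσ.1, fun h => (h hv).2 (Finset.mem_singleton_self v)⟩

theorem isPoint_of_forall_eq (hv : {v} ∈ K.faces) (h : ∀ u, {u} ∈ K.faces → u = v) :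
    IsPoint K :=
  ⟨v, Set.ext fun σ => ⟨fun hσ => Finset.eq_singleton_iff_nonempty_unique_mem.2
    ⟨K.nonempty_of_mem σ hσ, fun u hu => h u (singleton_mem_of_mem hσ hu)⟩, fun hσ => hσ ▸ hv⟩⟩

end Basic

section Contiguity

variable {V W X : Type} {K : AbsSC V} {L : AbsSC W} {M : AbsSC X} {f g : V → W}

theorem Contig.symm [DecidableEq W] (h : Contig K L f g) : Contig K L g f :=
  ⟨h.2.1, h.1, fun σ hσ => Finset.union_comm (σ.image f) _ ▸ h.2.2 σ hσ⟩

theorem ContigClass.symm [DecidableEq W] (h : ContigClass K L f g) : ContigClass K L g f :=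
  Relation.ReflTransGen.mono (fun _ _ => Contig.symm) _ _ (Relation.ReflTransGen.swap _ _ h)

theorem IsSimplicial.comp [DecidableEq W] [DecidableEq X] {φ : W → X}
    (hφ : IsSimplicial L M φ) (hf : IsSimplicial K L f) : IsSimplicial K M (φ ∘ f) := fun σ hσ => by
  rw [← Finset.image_image]; exact hφ _ (hf σ hσ)

theorem Contig.comp_left [DecidableEq W] [DecidableEq X] {φ : W → X}
    (hφ : IsSimplicial L M φ) (h : Contig K L f g) : Contig K M (φ ∘ f) (φ ∘ g) :=
  ⟨hφ.comp h.1, hφ.comp h.2.1, fun σ hσ => by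
    rw [← Finset.image_image, ← Finset.image_image, ← Finset.image_union]
    exact hφ _ (h.2.2 σ hσ)⟩

theorem Contig.comp_right [DecidableEq V] [DecidableEq W] {ψ : X → V} (h : Contig K L f g)
    (hψ : IsSimplicial M K ψ) : Contig M L (f ∘ ψ) (g ∘ ψ) :=
  ⟨h.1.comp hψ, h.2.1.comp hψ, fun σ hσ => by
    rw [← Finset.image_image, ← Finset.image_image]
    exact h.2.2 _ (hψ σ hσ)⟩

theorem ContigClass.comp_left [DecidableEq W] [DecidableEq X] {φ : W → X}
    (hφ : IsSimplicial L M φ) (h : ContigClass K L f g) : ContigClass K M (φ ∘ f) (φ ∘ g) :=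
  Relation.ReflTransGen.lift (φ ∘ ·) (fun _ _ => Contig.comp_left hφ) _ _ h

theorem ContigClass.comp_right [DecidableEq V] [DecidableEq W] {ψ : X → V}
    (h : ContigClass K L f g) (hψ : IsSimplicial M K ψ) : ContigClass M L (f ∘ ψ) (g ∘ ψ) :=
  Relation.ReflTransGen.lift (· ∘ ψ) (fun _ _ hc => hc.comp_right hψ) _ _ h

end Contiguity

section Contractible

variable {V W : Type} [DecidableEq V] [DecidableEq W] {K : AbsSC V} {L : AbsSC W}

def Contractible (K : AbsSC V) : Prop :=
  ∃ v : V, {v} ∈ K.faces ∧ ContigClass K K id (fun _ => v)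

theorem catCover_zero_iff : CatCover K 0 ↔ Contractible K := by
  refine ⟨fun ⟨U, hU, hcover⟩ => ?_, fun ⟨v, hv, hK⟩ => ?_⟩
  · have hUK : U 0 = K := faces_injective <| (hU 0).1.antisymm fun σ hσ => by
      obtain ⟨i, hi⟩ := hcover σ hσ
      rwa [Fin.fin_one_eq_zero i] at hi
    obtain ⟨-, v, hv, hK⟩ := hU 0
    exact ⟨v, hv, hUK ▸ hK⟩
  · exact ⟨fun _ => K, fun _ => ⟨subset_rfl, v, hv, hK⟩, fun σ hσ => ⟨0, hσ⟩⟩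

theorem scat_le_of_catCover {n : ℕ} (h : CatCover K n) : scat K ≤ n :=
  Nat.sInf_le h

theorem scat_eq_one (h1 : CatCover K 1) (h0 : ¬ CatCover K 0) : scat K = 1 :=
  (scat_le_of_catCover h1).antisymm <|
    le_csInf ⟨1, h1⟩ fun n hn => Nat.one_le_iff_ne_zero.2 <| by rintro rfl; exact h0 hn

theorem StrongEquiv.symm (h : StrongEquiv K L) : StrongEquiv L K :=
  let ⟨φ, ψ, hφ, hψ, hψφ, hφψ⟩ := h
  ⟨ψ, φ, hψ, hφ, hφψ, hψφ⟩

theorem StrongEquiv.contractible (h : StrongEquiv K L) (hK : Contractible K) : Contractible L := by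
  obtain ⟨φ, ψ, hφ, hψ, -, hφψ⟩ := h
  obtain ⟨v, hv, hKv⟩ := hK
  refine ⟨φ v, by simpa using hφ {v} hv, hφψ.symm.trans ?_⟩
  exact (hKv.comp_left hφ).comp_right hψ

theorem IsPoint.contractible (h : IsPoint K) : Contractible K := by
  obtain ⟨v, hK⟩ := h
  refine ⟨v, hK ▸ rfl, .single ⟨fun σ hσ => ?_, fun σ hσ => ?_, fun σ hσ => ?_⟩⟩ <;>
  · rw [hK] at hσ ⊢
    simp_all

end Contractible

section Minimal

variable {V : Type} [DecidableEq V] {M : AbsSC V}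

theorem Minimal.apply_eq_of_contig (hM : Minimal M) {f g : V → V}
    (hf : ∀ v, {v} ∈ M.faces → f v = v) (h : Contig M M f g) :
    ∀ v, {v} ∈ M.faces → g v = v := by
  intro v hv
  by_contra hgv
  refine hM v ⟨g v, hgv, hv, by simpa using h.2.1 {v} hv, fun σ hσ hvσ => ?_⟩
  have hfσ : σ.image f = σ :=
    (Finset.image_congr fun u hu => hf u (singleton_mem_of_mem hσ.1 hu)).trans Finset.image_id
  have hσ_eq : σ = σ.image f ∪ σ.image g :=
    hσ.2 _ (h.2.2 σ hσ.1) (by rw [hfσ]; exact Finset.subset_union_left)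
  rw [hσ_eq]
  exact Finset.mem_union_right _ (Finset.mem_image_of_mem g hvσ)

theorem Minimal.apply_eq_of_contigClass (hM : Minimal M) {f : V → V}
    (h : ContigClass M M id f) : ∀ v, {v} ∈ M.faces → f v = v := by
  induction h with
  | refl => exact fun _ _ => rfl
  | tail _ hc ih => exact hM.apply_eq_of_contig ih hc

theorem Minimal.not_contractible (hM : Minimal M) {u w : V} (hu : {u} ∈ M.faces)
    (hw : {w} ∈ M.faces) (huw : u ≠ w) : ¬ Contractible M := fun ⟨_, _, h⟩ =>
  huw ((hM.apply_eq_of_contigClass h u hu).symm.trans (hM.apply_eq_of_contigClass h w hw))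

end Minimal

section StrongCollapse

variable {V : Type} [DecidableEq V] {K : AbsSC V} {v v' : V} {σ : Finset V}

theorem image_update_union_mem [Finite V] (hdom : ∀ τ, MaximalFace K τ → v ∈ τ → v' ∈ τ)
    (hσ : σ ∈ K.faces) : σ.image (Function.update id v v') ∪ σ ∈ K.faces := by
  obtain ⟨τ, hτ, hστ⟩ := exists_maximalFace_superset hσ
  refine K.down_closed τ hτ.1 _ (Finset.union_subset ?_ hστ)
    ((K.nonempty_of_mem σ hσ).mono Finset.subset_union_right)
  intro x hx
  obtain ⟨u, hu, rfl⟩ := Finset.mem_image.1 hx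
  rcases eq_or_ne u v with rfl | huv
  · simpa using hdom τ hτ (hστ hu)
  · simpa [huv] using hστ hu

theorem image_update_of_notMem (hv : v ∉ σ) : σ.image (Function.update id v v') = σ :=
  (Finset.image_congr fun u hu => by simp [ne_of_mem_of_not_mem hu hv]).trans Finset.image_id

theorem strongEquiv_delete [Finite V] (hv : Dominated K v) : StrongEquiv K (K.delete v) := by
  obtain ⟨v', hv'v, -, -, hdom⟩ := hv
  set r := Function.update id v v'
  have hr : IsSimplicial K (K.delete v) r := fun σ hσ =>
    ⟨K.down_closed _ (image_update_union_mem hdom hσ) _ Finset.subset_union_left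
      ((K.nonempty_of_mem σ hσ).image r), by simp [r, Function.update_apply, ite_eq_iff, hv'v]⟩
  have hincl : IsSimplicial (K.delete v) K id := fun σ hσ => by simpa using hσ.1
  refine ⟨r, id, hr, hincl, .single ⟨fun σ hσ => (hr σ hσ).1, fun σ hσ => by simpa using hσ,
    fun σ hσ => by simpa using image_update_union_mem hdom hσ⟩, .single ?_⟩
  refine ⟨fun σ hσ => ?_, fun σ hσ => ?_, fun σ hσ => ?_⟩ <;>
    simpa [r, image_update_of_notMem hσ.2] using hσ

end StrongCollapse

section Join

variable {V W : Type} {K : AbsSC V} {L : AbsSC W} {σ : Finset (V ⊕ W)} {v : V}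

theorem mem_join_faces : σ ∈ (K.join L).faces ↔ σ.Nonempty ∧
    (σ.toLeft.Nonempty → σ.toLeft ∈ K.faces) ∧ (σ.toRight.Nonempty → σ.toRight ∈ L.faces) := by
  have hl : sumLeft σ = σ.toLeft := by ext; simp [sumLeft]
  have hr : sumRight σ = σ.toRight := by ext; simp [sumRight]
  rw [← hl, ← hr]
  rfl

theorem singleton_inl_mem_join (hv : {v} ∈ K.faces) :
    {.inl v} ∈ (K.join L).faces :=
  mem_join_faces.2 ⟨by simp, fun _ => by simpa using hv, by simp⟩

theorem join_delete_inl (v : V) : (K.join L).delete (.inl v) = (K.delete v).join L := by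
  refine faces_injective (Set.ext fun σ => ?_)
  change (σ ∈ (K.join L).faces ∧ _) ↔ _
  rw [mem_join_faces, mem_join_faces]
  constructor
  · rintro ⟨⟨hne, hl, hr⟩, hv⟩
    exact ⟨hne, fun h => ⟨hl h, by simpa using hv⟩, hr⟩
  · rintro ⟨hne, hl, hr⟩
    exact ⟨⟨hne, fun h => (hl h).1, hr⟩, fun hv => (hl ⟨v, by simpa⟩).2 (by simpa)⟩

theorem Dominated.join_inl [Finite V] (hv : Dominated K v) : Dominated (K.join L) (.inl v) := by
  obtain ⟨v', hv'v, hvK, hv'K, hdom⟩ := hv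
  refine ⟨.inl v', by simpa, singleton_inl_mem_join hvK, singleton_inl_mem_join hv'K,
    fun σ hσ hvσ => ?_⟩
  obtain ⟨hne, hl, hr⟩ := mem_join_faces.1 hσ.1
  obtain ⟨ρ, hρ, hσρ⟩ := exists_maximalFace_superset (hl ⟨v, by simpa⟩)
  -- enlarging the `K`-part of the maximal face `σ` to `ρ` stays in the join, hence adds nothing
  have hface : ρ.disjSum σ.toRight ∈ (K.join L).faces :=
    mem_join_faces.2 ⟨hne.mono (Finset.subset_disjSum.2 ⟨hσρ, subset_rfl⟩),
      fun _ => by simpa using hρ.1, by simpa using hr⟩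
  rw [hσ.2 _ hface (Finset.subset_disjSum.2 ⟨hσρ, subset_rfl⟩)]
  simpa using hdom ρ hρ (hσρ (by simpa))

theorem MaximalFace.disjSum {ρ : Finset V} {τ : Finset W} (hρ : MaximalFace K ρ)
    (hτ : MaximalFace L τ) : MaximalFace (K.join L) (ρ.disjSum τ) := by
  obtain ⟨a, ha⟩ := K.nonempty_of_mem ρ hρ.1
  refine ⟨mem_join_faces.2 ⟨⟨.inl a, by simpa⟩, fun _ => by simpa using hρ.1,
    fun _ => by simpa using hτ.1⟩, fun σ hσ hsub => ?_⟩
  obtain ⟨-, hl, hr⟩ := mem_join_faces.1 hσ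
  obtain ⟨hρσ, hτσ⟩ := Finset.disjSum_subset.1 hsub
  rw [← Finset.toLeft_disjSum_toRight (u := σ),
    ← hρ.2 _ (hl (Finset.Nonempty.mono hρσ ⟨a, ha⟩)) hρσ,
    ← hτ.2 _ (hr ((L.nonempty_of_mem τ hτ.1).mono hτσ)) hτσ]

end Join

def sphereZero : AbsSC Bool where
  faces := {s | s.card = 1}
  nonempty_of_mem _ h := Finset.card_pos.1 (h ▸ Nat.one_pos)
  down_closed _ h _ hts ht :=
    ((Finset.card_le_card hts).trans h.le).antisymm (Finset.card_pos.2 ht)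

/-- The poles of `ΣK = K ∗ S⁰` are `.inr true` and `.inr false`. -/
def susp {V : Type} (K : AbsSC V) : AbsSC (V ⊕ Bool) := K.join sphereZero

section Suspension

variable {V : Type} {K : AbsSC V} {σ : Finset (V ⊕ Bool)}

theorem mem_susp_faces : σ ∈ (susp K).faces ↔ σ.Nonempty ∧
    (σ.toLeft.Nonempty → σ.toLeft ∈ K.faces) ∧ σ.toRight.card ≤ 1 := by
  refine mem_join_faces.trans (and_congr_right' (and_congr_right' ?_))
  rw [← Finset.card_pos]
  change (0 < _ → _ = 1) ↔ _
  omega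

theorem mem_susp_faces_iff_exists [DecidableEq V] : σ ∈ (susp K).faces ↔ σ.Nonempty ∧
    ∃ (τ : Finset V) (s : Finset Bool), (τ = ∅ ∨ τ ∈ K.faces) ∧ s.card ≤ 1 ∧
      σ = τ.image Sum.inl ∪ s.image Sum.inr := by
  have hdisjSum (τ : Finset V) (s : Finset Bool) : τ.image .inl ∪ s.image .inr = τ.disjSum s := by
    ext (x | x) <;> simp
  simp_rw [hdisjSum, Finset.eq_disjSum_iff, mem_susp_faces]
  constructor
  · rintro ⟨hne, hl, hr⟩
    exact ⟨hne, _, _, σ.toLeft.eq_empty_or_nonempty.imp_right hl, hr, rfl, rfl⟩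
  · rintro ⟨hne, _, _, hτ, hs, rfl, rfl⟩
    exact ⟨hne, fun h => hτ.resolve_left h.ne_empty, hs⟩

theorem pole_mem_susp (b : Bool) : {.inr b} ∈ (susp K).faces :=
  mem_susp_faces.2 ⟨by simp, by simp, by simp⟩

theorem not_pole_mem_of_pole_mem (hσ : σ ∈ (susp K).faces) {b : Bool} (hb : .inr b ∈ σ) :
    .inr (!b) ∉ σ := fun hnb => by
  simpa using Finset.card_le_one.1 (mem_susp_faces.1 hσ).2.2 b (by simpa) (!b) (by simpa)

theorem MaximalFace.disjSum_pole {ρ : Finset V} (hρ : MaximalFace K ρ) (b : Bool) :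
    MaximalFace (susp K) (ρ.disjSum {b}) :=
  hρ.disjSum ⟨Finset.card_singleton b, fun _ hτ hbτ => Finset.eq_of_subset_of_card_le hbτ
    (hτ.trans (Finset.card_singleton b).symm).le⟩

theorem minimal_susp [Finite V] (hK : Minimal K) (hpt : ¬ IsPoint K) : Minimal (susp K) := by
  rintro x ⟨y, hyx, hx, hy, hdom⟩
  rcases x with v | b <;> rcases y with v' | b'
  · refine hK v ⟨v', by simpa using hyx, by simpa using (mem_susp_faces.1 hx).2.1 (by simp),
      by simpa using (mem_susp_faces.1 hy).2.1 (by simp), fun ρ hρ hvρ => ?_⟩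
    simpa using hdom _ (hρ.disjSum_pole true) (by simpa)
  · -- a maximal face through the edge `{v, !b'}` would contain both poles
    have hedge : ({v} : Finset V).disjSum {!b'} ∈ (susp K).faces :=
      mem_susp_faces.2 ⟨⟨.inl v, by simp⟩,
        fun _ => by simpa using (mem_susp_faces.1 hx).2.1 (by simp), by simp⟩
    obtain ⟨τ, hτ, hsub⟩ := exists_maximalFace_superset hedge
    exact not_pole_mem_of_pole_mem hτ.1 (hdom τ hτ (hsub (by simp))) (hsub (by simp))
  · -- `v'` lies in every maximal face of `K`, so it dominates any other vertex
    have hv' : {v'} ∈ K.faces := by simpa using (mem_susp_faces.1 hy).2.1 (by simp)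
    obtain ⟨u, hu, huv'⟩ : ∃ u, {u} ∈ K.faces ∧ u ≠ v' := by
      by_contra! h
      exact hpt (isPoint_of_forall_eq hv' h)
    exact hK u ⟨v', huv'.symm, hu, hv', fun ρ hρ _ => by
      simpa using hdom _ (hρ.disjSum_pole b) (by simp)⟩
  · obtain ⟨τ, hτ, hbτ⟩ := exists_maximalFace_superset hx
    have hb' : b' = !b := Bool.eq_not.2 (by simpa using hyx)
    exact not_pole_mem_of_pole_mem hτ.1 (hbτ (Finset.mem_singleton_self _))
      (hb' ▸ hdom τ hτ (hbτ (Finset.mem_singleton_self _)))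

theorem categorical_delete_pole [DecidableEq V] (b : Bool) :
    Categorical (susp K) ((susp K).delete (.inr b)) := by
  refine ⟨fun σ hσ => hσ.1, .inr !b, pole_mem_susp _, .single ⟨fun σ hσ => by simpa using hσ.1,
    fun σ hσ => ?_, fun σ hσ => ?_⟩⟩
  · rw [Finset.image_const ((susp K).nonempty_of_mem σ hσ.1)]
    exact pole_mem_susp _
  · rw [Finset.image_id, Finset.image_const ((susp K).nonempty_of_mem σ hσ.1),
      Finset.union_singleton]
    obtain ⟨-, hl, hr⟩ := mem_susp_faces.1 hσ.1
    refine mem_susp_faces.2 ⟨Finset.insert_nonempty _ _, by simpa using hl, ?_⟩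
    have hsub : insert (!b) σ.toRight ⊆ {!b} := Finset.insert_subset_iff.2
      ⟨Finset.mem_singleton_self _, fun c hc => Finset.mem_singleton.2 <| Bool.eq_not.2
        fun hcb => hσ.2 (hcb ▸ Finset.mem_toRight.1 hc)⟩
    simpa using (Finset.card_le_card hsub).trans (Finset.card_singleton _).le

theorem catCover_one_susp [DecidableEq V] : CatCover (susp K) 1 := by
  refine ⟨![(susp K).delete (.inr true), (susp K).delete (.inr false)],
    Fin.forall_fin_two.2 ⟨categorical_delete_pole true, categorical_delete_pole false⟩,
    fun σ hσ => ?_⟩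
  by_cases ht : .inr true ∈ σ
  · exact ⟨1, hσ, not_pole_mem_of_pole_mem hσ ht⟩
  · exact ⟨0, hσ, ht⟩

end Suspension

theorem contractible_of_contractible_susp {V : Type} [DecidableEq V] [Finite V] {K : AbsSC V}
    (h : Contractible (susp K)) : Contractible K := by
  induction hn : K.faces.ncard using Nat.strong_induction_on generalizing K with
  | _ n ih =>
  by_cases hdom : ∃ v, Dominated K v
  · obtain ⟨v, hv⟩ := hdom
    have ⟨_, _, hvK, _⟩ := hv
    have hdel : Contractible (susp (K.delete v)) := by
      rw [susp, ← join_delete_inl]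
      exact (strongEquiv_delete hv.join_inl).contractible h
    exact (strongEquiv_delete hv).symm.contractible
      (ih _ (hn ▸ ncard_faces_delete_lt hvK) hdel rfl)
  by_cases hpt : IsPoint K
  · exact hpt.contractible
  · exact absurd h <| (minimal_susp (not_exists.1 hdom) hpt).not_contractible
      (pole_mem_susp true) (pole_mem_susp false) (by simp)

end AbsSC

/-- if `scat K > 0` then the suspension `ΣK = K ∗ S⁰` has `scat = 1`. -/
theorem scat_suspension {V : Type} [DecidableEq V] [Fintype V]
    (K : AbsSC V) (C : AbsSC (V ⊕ Bool))
    (hC : ∀ σ : Finset (V ⊕ Bool), σ ∈ C.faces ↔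
      σ.Nonempty ∧ ∃ (τ : Finset V) (s : Finset Bool),
        (τ = ∅ ∨ τ ∈ K.faces) ∧ s.card ≤ 1 ∧
        σ = τ.image Sum.inl ∪ s.image Sum.inr)
    (h : 0 < AbsSC.scat K) : AbsSC.scat C = 1 := by
  obtain rfl : C = AbsSC.susp K :=
    AbsSC.faces_injective (Set.ext fun σ => (hC σ).trans AbsSC.mem_susp_faces_iff_exists.symm)
  refine AbsSC.scat_eq_one AbsSC.catCover_one_susp fun h0 => h.not_ge ?_
  exact AbsSC.scat_le_of_catCover <| AbsSC.catCover_zero_iff.2 <|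
    AbsSC.contractible_of_contractible_susp (AbsSC.catCover_zero_iff.1 h0)
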